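/- For a single integer s > 1, lim_{q → 1⁻} (1-q)^s [s](q) = ζ(s), where [s](q) = (1/(s-1)!) Σ_{n>0} σ_{s-1}(n) q^n and σ_{s-1}(n) = Σ_{d | n} d^{s-1}. -/

import Mathlib

open Filter

namespace LimitBracketAux

/-- The "polylog"-type series `∑_{d ≥ 1} d^t x^d`. -/
noncomputable def P (t : ℕ) (x : ℝ) : ℝ := ∑' d : ℕ, ((d : ℝ) + 1) ^ t * x ^ (d + 1)

lemma summable_P_terms (t : ℕ) {x : ℝ} (hx : |x| < 1) :
    Summable (fun d : ℕ => ((d : ℝ) + 1) ^ t * x ^ (d + 1)) := by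
  have h := summable_pow_mul_geometric_of_norm_lt_one (R := ℝ) t
    (r := x) (by rwa [Real.norm_eq_abs])
  have h2 := (summable_nat_add_iff (f := fun n : ℕ => (n : ℝ) ^ t * x ^ n) 1).2 h
  refine h2.congr fun d => ?_
  push_cast
  ring

lemma P_nonneg (t : ℕ) {x : ℝ} (hx : 0 ≤ x) : 0 ≤ P t x := by
  refine tsum_nonneg fun d => ?_
  positivity

lemma P_le (t : ℕ) {x : ℝ} (hx0 : 0 ≤ x) (hx1 : x < 1) :
    P t x ≤ ((t.factorial : ℝ) * x) * (1 / (1 - x) ^ (t + 1)) := by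
  have habs : |x| < 1 := abs_lt.2 ⟨by linarith, hx1⟩
  have H := (hasSum_choose_mul_geometric_of_norm_lt_one (𝕜 := ℝ) t
    (r := x) (by rwa [Real.norm_eq_abs])).mul_left ((t.factorial : ℝ) * x)
  rw [P, ← H.tsum_eq]
  refine Summable.tsum_le_tsum (fun d => ?_) (summable_P_terms t habs) H.summable
  have hnat : (d + 1) ^ t ≤ t.factorial * (d + t).choose t := by
    calc (d + 1) ^ t ≤ (d + 1).ascFactorial t := Nat.pow_succ_le_ascFactorial _ _
    _ = (d + 1 + t - 1).descFactorial t := (Nat.add_descFactorial_eq_ascFactorial' _ _).symm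
    _ = (d + t).descFactorial t := by congr 1; omega
    _ = t.factorial * (d + t).choose t := Nat.descFactorial_eq_factorial_mul_choose _ _
  have hreal : ((d : ℝ) + 1) ^ t ≤ (t.factorial : ℝ) * ((d + t).choose t : ℝ) := by
    have := (Nat.cast_le (α := ℝ)).2 hnat
    push_cast at this ⊢
    linarith
  calc ((d : ℝ) + 1) ^ t * x ^ (d + 1)
      ≤ ((t.factorial : ℝ) * ((d + t).choose t : ℝ)) * x ^ (d + 1) :=
        mul_le_mul_of_nonneg_right hreal (pow_nonneg hx0 _)
    _ = (t.factorial : ℝ) * x * (((d + t).choose t : ℝ) * x ^ d) := by ring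

lemma le_P (t : ℕ) (ht : 1 ≤ t) {x : ℝ} (hx0 : 0 ≤ x) (hx1 : x < 1) :
    ((t.factorial : ℝ) * x ^ t) * (1 / (1 - x) ^ (t + 1)) ≤ P t x := by
  obtain ⟨u, rfl⟩ : ∃ u, t = u + 1 := ⟨t - 1, by omega⟩
  set t := u + 1
  have habs : |x| < 1 := abs_lt.2 ⟨by linarith, hx1⟩
  have H := (hasSum_choose_mul_geometric_of_norm_lt_one (𝕜 := ℝ) t
    (r := x) (by rwa [Real.norm_eq_abs])).mul_left ((t.factorial : ℝ) * x ^ t)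
  rw [P, ← H.tsum_eq]
  refine Summable.tsum_le_tsum_of_inj (fun d => d + u) (add_left_injective u)
    (fun c _ => by positivity) (fun d => ?_) H.summable (summable_P_terms t habs)
  have hnat : t.factorial * (d + t).choose t ≤ (d + t) ^ t := by
    rw [← Nat.descFactorial_eq_factorial_mul_choose]
    exact Nat.descFactorial_le_pow _ _
  have hreal : (t.factorial : ℝ) * ((d + t).choose t : ℝ) ≤ ((d : ℝ) + t) ^ t := by
    have := (Nat.cast_le (α := ℝ)).2 hnat
    push_cast at this ⊢
    linarith
  have hidx : d + u + 1 = d + t := by omega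
  calc (t.factorial : ℝ) * x ^ t * (((d + t).choose t : ℝ) * x ^ d)
      = ((t.factorial : ℝ) * ((d + t).choose t : ℝ)) * x ^ (d + t) := by ring
    _ ≤ ((d : ℝ) + t) ^ t * x ^ (d + t) :=
        mul_le_mul_of_nonneg_right hreal (pow_nonneg hx0 _)
    _ = ((↑(d + u) : ℝ) + 1) ^ t * x ^ (d + u + 1) := by
        rw [hidx]; simp only [t]; push_cast; ring_nf

lemma tendsto_P (t : ℕ) (ht : 1 ≤ t) :
    Tendsto (fun x : ℝ => (1 - x) ^ (t + 1) * P t x) (nhdsWithin 1 (Set.Iio (1 : ℝ)))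
      (nhds (t.factorial : ℝ)) := by
  have hIoo : Set.Ioo (0 : ℝ) 1 ∈ nhdsWithin 1 (Set.Iio (1 : ℝ)) :=
    Ioo_mem_nhdsLT_of_mem (by constructor <;> norm_num)
  have hlow : Tendsto (fun x : ℝ => (t.factorial : ℝ) * x ^ t)
      (nhdsWithin 1 (Set.Iio (1 : ℝ))) (nhds (t.factorial : ℝ)) := by
    have hc : Continuous fun x : ℝ => (t.factorial : ℝ) * x ^ t := by fun_prop
    have := (hc.tendsto (1 : ℝ)).mono_left (nhdsWithin_le_nhds (s := Set.Iio (1:ℝ)))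
    simpa using this
  have hup : Tendsto (fun x : ℝ => (t.factorial : ℝ) * x)
      (nhdsWithin 1 (Set.Iio (1 : ℝ))) (nhds (t.factorial : ℝ)) := by
    have hc : Continuous fun x : ℝ => (t.factorial : ℝ) * x := by fun_prop
    have := (hc.tendsto (1 : ℝ)).mono_left (nhdsWithin_le_nhds (s := Set.Iio (1:ℝ)))
    simpa using this
  refine tendsto_of_tendsto_of_tendsto_of_le_of_le' hlow hup ?_ ?_
  · filter_upwards [hIoo] with x hx
    have h1x : (0 : ℝ) < 1 - x := by linarith [hx.2]
    have := mul_le_mul_of_nonneg_left (le_P t ht hx.1.le hx.2) (le_of_lt (pow_pos h1x (t + 1)))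
    calc (t.factorial : ℝ) * x ^ t
        = (1 - x) ^ (t + 1) * (((t.factorial : ℝ) * x ^ t) * (1 / (1 - x) ^ (t + 1))) := by
          field_simp
      _ ≤ (1 - x) ^ (t + 1) * P t x := this
  · filter_upwards [hIoo] with x hx
    have h1x : (0 : ℝ) < 1 - x := by linarith [hx.2]
    have := mul_le_mul_of_nonneg_left (P_le t hx.1.le hx.2) (le_of_lt (pow_pos h1x (t + 1)))
    calc (1 - x) ^ (t + 1) * P t x
        ≤ (1 - x) ^ (t + 1) * (((t.factorial : ℝ) * x) * (1 / (1 - x) ^ (t + 1))) := this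
      _ = (t.factorial : ℝ) * x := by field_simp

end LimitBracketAux

namespace LimitBracketAux

open Filter

lemma geom_identity (q : ℝ) (m : ℕ) :
    1 - q ^ m = (1 - q) * ∑ i ∈ Finset.range m, q ^ i := by
  have h := geom_sum_mul q m
  linear_combination h

lemma sum_pos_of_pos {q : ℝ} (hq : 0 < q) (m : ℕ) (hm : 0 < m) :
    0 < ∑ i ∈ Finset.range m, q ^ i :=
  Finset.sum_pos (fun i _ => pow_pos hq i) (Finset.nonempty_range_iff.2 hm.ne')

lemma tendsto_term (t : ℕ) (ht : 1 ≤ t) (k : ℕ) :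
    Tendsto (fun q : ℝ => (1 - q) ^ (t + 1) * P t (q ^ (k + 1)))
      (nhdsWithin 1 (Set.Iio (1 : ℝ)))
      (nhds ((t.factorial : ℝ) * (1 / ((k + 1 : ℕ) : ℝ) ^ (t + 1)))) := by
  set m := k + 1 with hm
  have hIoo : Set.Ioo (0 : ℝ) 1 ∈ nhdsWithin 1 (Set.Iio (1 : ℝ)) :=
    Ioo_mem_nhdsLT_of_mem (by constructor <;> norm_num)
  have hpow : Tendsto (fun q : ℝ => q ^ m) (nhdsWithin 1 (Set.Iio (1 : ℝ)))
      (nhdsWithin 1 (Set.Iio (1 : ℝ))) := by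
    refine tendsto_nhdsWithin_of_tendsto_nhds_of_eventually_within _ ?_ ?_
    · have := ((continuous_pow m).tendsto (1 : ℝ)).mono_left
        (nhdsWithin_le_nhds (s := Set.Iio (1 : ℝ)))
      simpa using this
    · filter_upwards [hIoo] with q hq
      exact pow_lt_one₀ hq.1.le hq.2 (by omega)
  have hD := (tendsto_P t ht).comp hpow
  have hSum : Tendsto (fun q : ℝ => ∑ i ∈ Finset.range m, q ^ i)
      (nhdsWithin 1 (Set.Iio (1 : ℝ))) (nhds ((m : ℝ))) := by
    have hc : Continuous fun q : ℝ => ∑ i ∈ Finset.range m, q ^ i := by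
      exact continuous_finset_sum _ fun i _ => continuous_pow i
    have := (hc.tendsto (1 : ℝ)).mono_left (nhdsWithin_le_nhds (s := Set.Iio (1 : ℝ)))
    simpa using this
  have hm0 : ((m : ℝ)) ≠ 0 := by positivity
  have hInv : Tendsto (fun q : ℝ => ((∑ i ∈ Finset.range m, q ^ i)⁻¹) ^ (t + 1))
      (nhdsWithin 1 (Set.Iio (1 : ℝ))) (nhds (((m : ℝ)⁻¹) ^ (t + 1))) :=
    (hSum.inv₀ hm0).pow (t + 1)
  have hprod := hInv.mul hD
  have hval : ((m : ℝ)⁻¹) ^ (t + 1) * (t.factorial : ℝ)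
      = (t.factorial : ℝ) * (1 / ((m : ℕ) : ℝ) ^ (t + 1)) := by
    field_simp
    rw [← mul_pow, one_div, inv_mul_cancel₀ hm0, one_pow]
  rw [hval] at hprod
  refine hprod.congr' ?_
  filter_upwards [hIoo] with q hq
  have hS0 : (∑ i ∈ Finset.range m, q ^ i) ≠ 0 := (sum_pos_of_pos hq.1 m (by omega)).ne'
  have hg : 1 - q ^ m = (1 - q) * ∑ i ∈ Finset.range m, q ^ i := geom_identity q m
  show ((∑ i ∈ Finset.range m, q ^ i)⁻¹) ^ (t + 1) * ((1 - q ^ m) ^ (t + 1) * P t (q ^ m))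
      = (1 - q) ^ (t + 1) * P t (q ^ m)
  rw [hg, ← mul_assoc, ← mul_pow, show (∑ i ∈ Finset.range m, q ^ i)⁻¹ *
    ((1 - q) * ∑ i ∈ Finset.range m, q ^ i) = 1 - q by field_simp]

lemma bound_term (t : ℕ) (ht : 1 ≤ t) {q : ℝ} (hq : q ∈ Set.Ioo (0 : ℝ) 1) (k : ℕ) :
    (1 - q) ^ (t + 1) * P t (q ^ (k + 1))
      ≤ ((t.factorial : ℝ) * ((t : ℝ) + 1) ^ (t + 1)) / ((k : ℝ) + 1) ^ (t + 1) := by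
  obtain ⟨hq0, hq1⟩ := hq
  set m := k + 1 with hmdef
  set s' := t + 1 with hs'def
  set S := ∑ i ∈ Finset.range m, q ^ i with hSdef
  have hm1 : 1 ≤ m := by omega
  have hS_pos : 0 < S := sum_pos_of_pos hq0 m (by omega)
  have hg : 1 - q ^ m = (1 - q) * S := geom_identity q m
  have hx0 : 0 < q ^ m := pow_pos hq0 m
  have hx1 : q ^ m < 1 := pow_lt_one₀ hq0.le hq1 (by omega)
  have h1q : 0 < 1 - q := by linarith
  -- the natural number `r`
  set r := m / s' + 1 with hrdef
  have hrm : r ≤ m := by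
    have h2 : m / s' ≤ m / 2 := Nat.div_le_div_left (by omega) (by omega)
    omega
  have hms : m ≤ s' * r := by
    have h3 : m % s' < s' := Nat.mod_lt _ (by omega)
    calc m = s' * (m / s') + m % s' := (Nat.div_add_mod m s').symm
      _ ≤ s' * (m / s') + s' := Nat.add_le_add_left h3.le _
      _ = s' * (m / s' + 1) := by rw [Nat.mul_add, Nat.mul_one]
      _ = s' * r := rfl
  have hexp : (r - 1) * s' ≤ m := by
    have hr1 : (r - 1) = m / s' := by simp [hrdef]
    rw [hr1]
    exact Nat.div_mul_le_self m s'
  -- S is at least r * q^(r-1)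
  have hSr : (r : ℝ) * q ^ (r - 1) ≤ S := by
    calc (r : ℝ) * q ^ (r - 1)
        = ∑ _i ∈ Finset.range r, q ^ (r - 1) := by
          rw [Finset.sum_const, Finset.card_range, nsmul_eq_mul]
      _ ≤ ∑ i ∈ Finset.range r, q ^ i := by
          refine Finset.sum_le_sum fun i hi => ?_
          exact pow_le_pow_of_le_one hq0.le hq1.le
            (by have := Finset.mem_range.1 hi; omega)
      _ ≤ S := Finset.sum_le_sum_of_subset_of_nonneg
          (Finset.range_subset_range.2 hrm) (fun i _ _ => (pow_pos hq0 i).le)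
  -- the key inequality
  have key : q ^ m * ((m : ℝ)) ^ s' ≤ ((s' : ℕ) : ℝ) ^ s' * S ^ s' := by
    have hcast : ((m : ℝ)) ≤ ((s' : ℕ) : ℝ) * r := by
      exact_mod_cast hms
    have h1 : ((m : ℝ)) ^ s' * q ^ m
        ≤ (((s' : ℕ) : ℝ) * r) ^ s' * q ^ ((r - 1) * s') := by
      refine mul_le_mul (pow_le_pow_left₀ (by positivity) hcast s')
        (pow_le_pow_of_le_one hq0.le hq1.le hexp) (by positivity) (by positivity)
    have h2 : (((s' : ℕ) : ℝ) * r) ^ s' * q ^ ((r - 1) * s')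
        = ((s' : ℕ) : ℝ) ^ s' * ((r : ℝ) * q ^ (r - 1)) ^ s' := by
      rw [mul_pow, mul_pow, pow_mul]
      ring
    have h3 : ((r : ℝ) * q ^ (r - 1)) ^ s' ≤ S ^ s' :=
      pow_le_pow_left₀ (by positivity) hSr s'
    calc q ^ m * ((m : ℝ)) ^ s' = ((m : ℝ)) ^ s' * q ^ m := by ring
      _ ≤ (((s' : ℕ) : ℝ) * r) ^ s' * q ^ ((r - 1) * s') := h1
      _ = ((s' : ℕ) : ℝ) ^ s' * ((r : ℝ) * q ^ (r - 1)) ^ s' := h2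
      _ ≤ ((s' : ℕ) : ℝ) ^ s' * S ^ s' := by
          exact mul_le_mul_of_nonneg_left h3 (by positivity)
  -- now the chain
  have c1 : (1 - q) ^ s' * P t (q ^ m)
      ≤ (1 - q) ^ s' * (((t.factorial : ℝ) * q ^ m) * (1 / (1 - q ^ m) ^ s')) :=
    mul_le_mul_of_nonneg_left (P_le t hx0.le hx1) (by positivity)
  have c2 : (1 - q) ^ s' * (((t.factorial : ℝ) * q ^ m) * (1 / (1 - q ^ m) ^ s'))
      = (t.factorial : ℝ) * (q ^ m / S ^ s') := by
    rw [hg, mul_pow]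
    have hS0 : S ≠ 0 := hS_pos.ne'
    have h1q0 : (1 - q) ≠ 0 := h1q.ne'
    field_simp
  have c3 : q ^ m / S ^ s' ≤ ((s' : ℕ) : ℝ) ^ s' / ((m : ℕ) : ℝ) ^ s' := by
    rw [div_le_div_iff₀ (by positivity) (by positivity)]
    exact_mod_cast key
  calc (1 - q) ^ s' * P t (q ^ m)
      ≤ (t.factorial : ℝ) * (q ^ m / S ^ s') := by rw [← c2]; exact c1
    _ ≤ (t.factorial : ℝ) * (((s' : ℕ) : ℝ) ^ s' / ((m : ℕ) : ℝ) ^ s') :=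
        mul_le_mul_of_nonneg_left c3 (by positivity)
    _ = ((t.factorial : ℝ) * ((t : ℝ) + 1) ^ (t + 1)) / ((k : ℝ) + 1) ^ (t + 1) := by
        rw [hs'def, hmdef]
        push_cast
        ring

end LimitBracketAux

namespace LimitBracketAux

open Filter

lemma summable_bound (t : ℕ) (ht : 1 ≤ t) (C : ℝ) :
    Summable (fun k : ℕ => C / ((k : ℝ) + 1) ^ (t + 1)) := by
  have h : Summable (fun n : ℕ => 1 / (n : ℝ) ^ (t + 1)) :=
    Real.summable_one_div_nat_pow.2 (by omega)
  have h2 := (summable_nat_add_iff (f := fun n : ℕ => 1 / (n : ℝ) ^ (t + 1)) 1).2 h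
  refine (h2.mul_left C).congr fun k => ?_
  push_cast
  ring

lemma summable_P_family (t : ℕ) (ht : 1 ≤ t) {q : ℝ} (hq : q ∈ Set.Ioo (0 : ℝ) 1) :
    Summable (fun k : ℕ => P t (q ^ (k + 1))) := by
  have h1q : (0 : ℝ) < 1 - q := by linarith [hq.2]
  have hpos : (0 : ℝ) < (1 - q) ^ (t + 1) := pow_pos h1q _
  refine Summable.of_nonneg_of_le (fun k => P_nonneg t (pow_pos hq.1 _).le) (fun k => ?_)
    ((summable_bound t ht ((t.factorial : ℝ) * ((t : ℝ) + 1) ^ (t + 1))).div_const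
      ((1 - q) ^ (t + 1)))
  rw [le_div_iff₀ hpos]
  calc P t (q ^ (k + 1)) * (1 - q) ^ (t + 1)
      = (1 - q) ^ (t + 1) * P t (q ^ (k + 1)) := by ring
    _ ≤ ((t.factorial : ℝ) * ((t : ℝ) + 1) ^ (t + 1)) / ((k : ℝ) + 1) ^ (t + 1) :=
        bound_term t ht hq k

lemma rearrange (t : ℕ) (ht : 1 ≤ t) {q : ℝ} (hq : q ∈ Set.Ioo (0 : ℝ) 1) :
    HasSum (fun n : ℕ => (∑ d ∈ n.divisors, (d : ℝ) ^ t) * q ^ n)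
      (∑' k : ℕ, P t (q ^ (k + 1))) := by
  obtain ⟨hq0, hq1⟩ := hq
  have habs : |q| < 1 := abs_lt.2 ⟨by linarith, hq1⟩
  set f : ℕ × ℕ → ℝ := fun p => if p.1 = 0 then 0 else (p.2 : ℝ) ^ t * q ^ (p.1 * p.2)
    with hf
  have hfnonneg : ∀ p, 0 ≤ f p := by
    intro p
    rcases eq_or_ne p.1 0 with h | h
    · simp [hf, h]
    · have hh : f p = (p.2 : ℝ) ^ t * q ^ (p.1 * p.2) := by simp [hf, h]
      rw [hh]; positivity
  have hrow : ∀ k : ℕ, (fun b => f (k + 1, b)) = fun b : ℕ => (b : ℝ) ^ t * (q ^ (k + 1)) ^ b := by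
    intro k
    funext b
    simp only [hf]
    rw [if_neg (Nat.succ_ne_zero k), ← pow_mul]
  have habs' : ∀ k : ℕ, |q ^ (k + 1)| < 1 := fun k => by
    rw [abs_pow]; exact pow_lt_one₀ (abs_nonneg q) habs (by omega)
  have hrowsum : ∀ k : ℕ, Summable fun b => f (k + 1, b) := by
    intro k
    rw [hrow k]
    exact summable_pow_mul_geometric_of_norm_lt_one t
      (by rw [Real.norm_eq_abs]; exact habs' k)
  have hrow0 : ∀ b, f (0, b) = 0 := fun b => if_pos rfl
  have hrows : ∀ a : ℕ, Summable fun b => f (a, b) := by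
    intro a
    cases a with
    | zero => exact summable_zero.congr fun b => (hrow0 b).symm
    | succ k => exact hrowsum k
  have hrowtsum : ∀ k : ℕ, ∑' b, f (k + 1, b) = P t (q ^ (k + 1)) := by
    intro k
    rw [hrow k]
    have hsum : Summable fun b : ℕ => (b : ℝ) ^ t * (q ^ (k + 1)) ^ b :=
      summable_pow_mul_geometric_of_norm_lt_one t (by rw [Real.norm_eq_abs]; exact habs' k)
    rw [Summable.tsum_eq_zero_add hsum]
    rw [Nat.cast_zero, zero_pow (by omega : t ≠ 0), zero_mul, zero_add]
    rw [P]
    exact tsum_congr fun d => by push_cast; ring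
  have hsummable : Summable f := by
    rw [summable_prod_of_nonneg hfnonneg]
    refine ⟨hrows, ?_⟩
    apply (summable_nat_add_iff 1).1
    exact (summable_P_family t ht ⟨hq0, hq1⟩).congr fun k => (hrowtsum k).symm
  have hfib := hsummable.hasSum.tsum_fiberwise (fun p => p.1 * p.2)
  have hfiber_eq : ∀ n : ℕ, (∑' (b : (fun p : ℕ × ℕ => p.1 * p.2) ⁻¹' {n}), f b)
      = (∑ d ∈ n.divisors, (d : ℝ) ^ t) * q ^ n := by
    intro n
    rcases eq_or_ne n 0 with rfl | hn
    · have hz : ∀ b : (fun p : ℕ × ℕ => p.1 * p.2) ⁻¹' {(0 : ℕ)}, f b = 0 := by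
        rintro ⟨⟨a, b⟩, hp⟩
        simp only [Set.mem_preimage, Set.mem_singleton_iff, Nat.mul_eq_zero] at hp
        rcases hp with rfl | rfl
        · exact if_pos rfl
        · simp [hf, zero_pow (show t ≠ 0 by omega)]
      rw [tsum_congr hz, tsum_zero]
      simp
    · rw [show (fun p : ℕ × ℕ => p.1 * p.2) ⁻¹' {n} = n.divisorsAntidiagonal by
        ext p; simp [Nat.mem_divisorsAntidiagonal, hn],
        Finset.tsum_subtype' n.divisorsAntidiagonal f]
      have hcongr : ∑ p ∈ n.divisorsAntidiagonal, f p
          = ∑ p ∈ n.divisorsAntidiagonal, (p.2 : ℝ) ^ t * q ^ n := by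
        refine Finset.sum_congr rfl fun p hp => ?_
        obtain ⟨h1, h2⟩ := Nat.ne_zero_of_mem_divisorsAntidiagonal hp
        have hmul := (Nat.mem_divisorsAntidiagonal.1 hp).1
        simp only [hf]
        rw [if_neg h1, hmul]
      rw [hcongr, Nat.sum_divisorsAntidiagonal' (f := fun _ b => (b : ℝ) ^ t * q ^ n),
        ← Finset.sum_mul]
  have hps : ∑' p, f p = ∑' k, P t (q ^ (k + 1)) := by
    rw [Summable.tsum_prod' hsummable hrows]
    have houter : Summable fun a : ℕ => ∑' b, f (a, b) :=
      ((summable_prod_of_nonneg hfnonneg).1 hsummable).2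
    rw [Summable.tsum_eq_zero_add houter]
    have h0 : ∑' b, f (0, b) = 0 := by
      rw [tsum_congr hrow0]; exact tsum_zero
    rw [h0, zero_add]
    exact tsum_congr hrowtsum
  rw [hps] at hfib
  exact (funext hfiber_eq : _) ▸ hfib

end LimitBracketAux


open Filter LimitBracketAux in
theorem limit_bracket_single (s : ℕ) (hs : 1 < s) :
    Tendsto
      (fun q : ℝ =>
        (1 - q) ^ s *
          ∑' n : ℕ, ((∑ d ∈ n.divisors, (d : ℝ) ^ (s - 1)) / (s - 1).factorial) * q ^ n)
      (nhdsWithin 1 (Set.Iio (1 : ℝ)))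
      (nhds (∑' n : ℕ, 1 / ((n + 1 : ℕ) : ℝ) ^ s)) := by
  obtain ⟨t, rfl⟩ : ∃ t, s = t + 1 := ⟨s - 1, by omega⟩
  have ht : 1 ≤ t := by omega
  simp only [Nat.add_sub_cancel]
  have hIoo : Set.Ioo (0 : ℝ) 1 ∈ nhdsWithin 1 (Set.Iio (1 : ℝ)) :=
    Ioo_mem_nhdsLT_of_mem (by constructor <;> norm_num)
  have hmain : Tendsto (fun q : ℝ => ∑' k : ℕ, (1 - q) ^ (t + 1) * P t (q ^ (k + 1)))
      (nhdsWithin 1 (Set.Iio (1 : ℝ)))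
      (nhds (∑' k : ℕ, (t.factorial : ℝ) * (1 / ((k + 1 : ℕ) : ℝ) ^ (t + 1)))) := by
    refine tendsto_tsum_of_dominated_convergence
      (summable_bound t ht ((t.factorial : ℝ) * ((t : ℝ) + 1) ^ (t + 1)))
      (fun k => tendsto_term t ht k) ?_
    filter_upwards [hIoo] with q hq k
    have h1q : (0 : ℝ) ≤ 1 - q := by linarith [hq.2]
    have hP := P_nonneg t (pow_pos hq.1 (k + 1)).le
    rw [Real.norm_eq_abs, abs_of_nonneg (by positivity)]
    exact bound_term t ht hq k
  have hfac : ((t.factorial : ℝ)) ≠ 0 := by exact_mod_cast t.factorial_ne_zero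
  have hZ : ∑' k : ℕ, (t.factorial : ℝ) * (1 / ((k + 1 : ℕ) : ℝ) ^ (t + 1))
      = (t.factorial : ℝ) * ∑' n : ℕ, 1 / ((n + 1 : ℕ) : ℝ) ^ (t + 1) := tsum_mul_left
  rw [hZ] at hmain
  have h2 := hmain.div_const (t.factorial : ℝ)
  rw [mul_div_cancel_left₀ _ hfac] at h2
  refine h2.congr' ?_
  filter_upwards [hIoo] with q hq
  have hrearr := (rearrange t ht hq).tsum_eq
  have hinner : ∑' n : ℕ, ((∑ d ∈ n.divisors, (d : ℝ) ^ t) / (t.factorial : ℝ)) * q ^ n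
      = (∑' k : ℕ, P t (q ^ (k + 1))) / (t.factorial : ℝ) := by
    rw [← hrearr, ← tsum_div_const]
    exact tsum_congr fun n => by ring
  show (∑' k : ℕ, (1 - q) ^ (t + 1) * P t (q ^ (k + 1))) / (t.factorial : ℝ)
      = (1 - q) ^ (t + 1)
        * ∑' n : ℕ, ((∑ d ∈ n.divisors, (d : ℝ) ^ t) / (t.factorial : ℝ)) * q ^ n
  rw [hinner, tsum_mul_left]
  ring
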